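/- Let N be a tree-based rooted binary phylogenetic X-network with maximal zig-zag trail decomposition Z_1, …, Z_d. A subgraph G of N is a support tree of N if and only if, for every i ∈ {1,…,d}, the set A(G) ∩ A(Z_i) is an admissible arc-set of Z_i. -/

import Mathlib

/-- A finite simple directed graph, given by a finite vertex set and a finite
set of arcs (ordered pairs of vertices) whose endpoints lie in the vertex set. -/
structure Dgraph (V : Type*) where
  verts : Finset V
  arcs : Finset (V × V)
  tail_mem : ∀ a ∈ arcs, a.1 ∈ verts
  head_mem : ∀ a ∈ arcs, a.2 ∈ verts

namespace Dgraph

variable {V : Type*}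

/-- The in-degree of a vertex. -/
def indeg [DecidableEq V] (G : Dgraph V) (v : V) : ℕ :=
  (G.arcs.filter fun a => a.2 = v).card

/-- The out-degree of a vertex. -/
def outdeg [DecidableEq V] (G : Dgraph V) (v : V) : ℕ :=
  (G.arcs.filter fun a => a.1 = v).card

/-- A leaf is a vertex of in-degree 1 and out-degree 0. -/
def IsLeaf [DecidableEq V] (G : Dgraph V) (v : V) : Prop :=
  v ∈ G.verts ∧ G.indeg v = 1 ∧ G.outdeg v = 0

/-- A directed graph is acyclic if it has no directed cycle. -/
def Acyclic (G : Dgraph V) : Prop :=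
  ∀ v : V, ¬ Relation.TransGen (fun u w => (u, w) ∈ G.arcs) v v

def IsSubgraph (H G : Dgraph V) : Prop :=
  H.verts ⊆ G.verts ∧ H.arcs ⊆ G.arcs

/-- The subgraph induced by a set of arcs: its vertices are all endpoints of those arcs. -/
def ofArcs [DecidableEq V] (A : Finset (V × V)) : Dgraph V where
  verts := A.image Prod.fst ∪ A.image Prod.snd
  arcs := A
  tail_mem := fun a ha => Finset.mem_union_left _ (Finset.mem_image_of_mem _ ha)
  head_mem := fun a ha => Finset.mem_union_right _ (Finset.mem_image_of_mem _ ha)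

/-- A rooted binary phylogenetic `X`-network: a finite simple directed acyclic graph
with a unique root of in-degree 0 and out-degree 1 or 2, whose leaf set is the
nonempty finite set `X`, and all of whose other vertices have
`{in-degree, out-degree} = {1, 2}`. -/
def IsRBPN [DecidableEq V] (N : Dgraph V) (X : Finset V) : Prop :=
  N.Acyclic ∧ X.Nonempty ∧ X ⊆ N.verts ∧
  ∃ ρ ∈ N.verts,
    N.indeg ρ = 0 ∧ (N.outdeg ρ = 1 ∨ N.outdeg ρ = 2) ∧
    (∀ v ∈ N.verts, N.indeg v = 0 → v = ρ) ∧
    (∀ v ∈ N.verts, (N.IsLeaf v ↔ v ∈ X)) ∧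
    (∀ v ∈ N.verts, v ∉ X → v ≠ ρ →
      (N.indeg v = 1 ∧ N.outdeg v = 2) ∨ (N.indeg v = 2 ∧ N.outdeg v = 1))

/-- A rooted binary phylogenetic `X`-tree: a rooted binary phylogenetic `X`-network
with no vertex of in-degree 2. -/
def IsRBPT [DecidableEq V] (T : Dgraph V) (X : Finset V) : Prop :=
  IsRBPN T X ∧ ∀ v ∈ T.verts, T.indeg v ≠ 2

/-- `H` is obtained from `G` by inserting one new (subdividing) vertex into one arc. -/
def SubdivideArc [DecidableEq V] (G H : Dgraph V) : Prop :=
  ∃ u v w : V, (u, v) ∈ G.arcs ∧ w ∉ G.verts ∧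
    H.verts = insert w G.verts ∧
    H.arcs = insert (u, w) (insert (w, v) (G.arcs.erase (u, v)))

/-- `IsSubdivisionOf T τ` : `τ` is obtained from `T` by inserting zero or more
subdividing vertices into arcs. -/
inductive IsSubdivisionOf [DecidableEq V] : Dgraph V → Dgraph V → Prop
  | refl (G : Dgraph V) : IsSubdivisionOf G G
  | step {G H K : Dgraph V} : IsSubdivisionOf G H → SubdivideArc H K → IsSubdivisionOf G K

/-- A support tree of `N`: a spanning subgraph of `N` that can be obtained from some
rooted binary phylogenetic `X`-tree by inserting zero or more vertices into each arc. -/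
def IsSupportTree [DecidableEq V] (N : Dgraph V) (X : Finset V) (τ : Dgraph V) : Prop :=
  τ.verts = N.verts ∧ τ.arcs ⊆ N.arcs ∧
  ∃ T : Dgraph V, IsRBPT T X ∧ IsSubdivisionOf T τ

/-- `N` is tree-based if it has a support tree. -/
def IsTreeBased [DecidableEq V] (N : Dgraph V) (X : Finset V) : Prop :=
  ∃ τ : Dgraph V, IsSupportTree N X τ

/-- `S` is an admissible arc-set of `G`. -/
def IsAdmissible [DecidableEq V] (G : Dgraph V) (S : Finset (V × V)) : Prop :=
  S ⊆ G.arcs ∧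
  (∀ a ∈ G.arcs, (G.indeg a.2 = 1 ∨ G.outdeg a.1 = 1) → a ∈ S) ∧
  (∀ a₁ ∈ G.arcs, ∀ a₂ ∈ G.arcs, a₁ ≠ a₂ → a₁.2 = a₂.2 →
    ((a₁ ∈ S ∧ a₂ ∉ S) ∨ (a₁ ∉ S ∧ a₂ ∈ S))) ∧
  (∀ a₁ ∈ G.arcs, ∀ a₂ ∈ G.arcs, a₁ ≠ a₂ → a₁.1 = a₂.1 → (a₁ ∈ S ∨ a₂ ∈ S))

end Dgraph

namespace Dgraph

variable {V : Type*}

/-- `Z` is (the arc set of) a zig-zag trail in `N`: a nonempty set of arcs of `N`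
admitting an ordering in which any two consecutive arcs share a head or share a tail
(the corresponding subgraph is the one induced by these arcs). -/
def IsZigzag [DecidableEq V] (N : Dgraph V) (Z : Finset (V × V)) : Prop :=
  Z ⊆ N.arcs ∧ ∃ l : List (V × V), l ≠ [] ∧ l.Nodup ∧ l.toFinset = Z ∧
    l.Chain' fun a b => a.2 = b.2 ∨ a.1 = b.1

/-- A maximal zig-zag trail of `N`: one that is not a proper subgraph of another
zig-zag trail in `N`. -/
def IsMaxZigzag [DecidableEq V] (N : Dgraph V) (Z : Finset (V × V)) : Prop :=
  IsZigzag N Z ∧ ∀ Z' : Finset (V × V), IsZigzag N Z' → Z ⊆ Z' → Z' = Z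

end Dgraph

/-!
Both sides amount to the same local condition on `G`: at the head of every arc of `N` exactly
one in-arc is kept, and at its tail some out-arc. An acyclic graph is a subdivided rooted
binary phylogenetic tree exactly when its degrees look like one (suppressing vertices of in- and
out-degree one recovers the tree), and for a spanning subgraph of `N` these degree conditions are
the local condition. On the other side, since all degrees in `N` are at most two, a maximal
zig-zag trail contains every arc sharing a head or a tail with one of its arcs; so the in-arcs
and the out-arcs of each vertex lie in one maximal trail, and admissibility there is the local
condition.
-/

theorem Finset.eq_of_card_le_two {α : Type*} {s : Finset α} (hs : s.card ≤ 2) {a b c : α}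
    (ha : a ∈ s) (hb : b ∈ s) (hc : c ∈ s) (hab : a ≠ b) (hac : a ≠ c) : b = c := by
  by_contra hbc
  exact (Finset.two_lt_card.2 ⟨a, ha, b, hb, c, hc, hab, hac, hbc⟩).not_ge hs

theorem Finset.eq_singleton_or_eq_pair_of_card_le_two {α : Type*} [DecidableEq α] {s : Finset α}
    {a : α} (ha : a ∈ s) (hs : s.card ≤ 2) : s = {a} ∨ ∃ b, a ≠ b ∧ s = {a, b} := by
  by_cases h : ∃ b ∈ s, a ≠ b
  · obtain ⟨b, hb, hab⟩ := h
    refine Or.inr ⟨b, hab, (Finset.eq_of_subset_of_card_le ?_ ?_).symm⟩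
    · simp [Finset.insert_subset_iff, ha, hb]
    · simpa [Finset.card_pair hab] using hs
  · push Not at h
    exact Or.inl (Finset.eq_singleton_iff_unique_mem.2 ⟨ha, fun b hb => (h b hb).symm⟩)

theorem Finset.card_inter_eq_one_iff_of_card_le_two {α : Type*} [DecidableEq α]
    {s t : Finset α} {a : α} (ha : a ∈ s) (hs : s.card ≤ 2) :
    (s ∩ t).card = 1 ↔
      (s.card = 1 → a ∈ t) ∧ ∀ b ∈ s, a ≠ b → (a ∈ t ∧ b ∉ t ∨ a ∉ t ∧ b ∈ t) := by
  rcases Finset.eq_singleton_or_eq_pair_of_card_le_two ha hs with rfl | ⟨b, hab, rfl⟩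
  · by_cases hat : a ∈ t <;> simp [hat]
  · by_cases hat : a ∈ t <;> by_cases hbt : b ∈ t <;>
      simp [hat, hbt, hab, Finset.card_pair hab, Finset.insert_inter_of_mem,
        Finset.insert_inter_of_notMem]

theorem Finset.inter_nonempty_iff_of_card_le_two {α : Type*} [DecidableEq α]
    {s t : Finset α} {a : α} (ha : a ∈ s) (hs : s.card ≤ 2) :
    (s ∩ t).Nonempty ↔ (s.card = 1 → a ∈ t) ∧ ∀ b ∈ s, a ≠ b → (a ∈ t ∨ b ∈ t) := by
  rcases Finset.eq_singleton_or_eq_pair_of_card_le_two ha hs with rfl | ⟨b, hab, rfl⟩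
  · by_cases hat : a ∈ t <;> simp [hat]
  · by_cases hat : a ∈ t <;> by_cases hbt : b ∈ t <;>
      simp [hat, hbt, hab, Finset.card_pair hab, Finset.insert_inter_of_mem,
        Finset.insert_inter_of_notMem]

/-- `b` has at most one neighbour in `l`, so it is an end of the chain. -/
theorem List.exists_perm_cons_isChain {α : Type*} {R : α → α → Prop} {l : List α}
    (hl : l.Nodup) (hch : l.IsChain R) {b c : α} (hb : b ∈ l) (hbc : R b c) (hcb : R c b)
    (huniq : ∀ x ∈ l, ∀ y ∈ l, x ≠ b → y ≠ b → R x b → R b y → x = y) :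
    ∃ l' : List α, l'.Perm (c :: l) ∧ l'.IsChain R := by
  obtain ⟨s, t, rfl⟩ := List.append_of_mem hb
  rcases s.eq_nil_or_concat' with rfl | ⟨s, x, rfl⟩
  · exact ⟨c :: b :: t, .refl _, hch.cons (by simpa using hcb)⟩
  rcases t with _ | ⟨y, t⟩
  · refine ⟨s ++ [x, b, c], by simpa using List.perm_append_singleton c (s ++ [x, b]), ?_⟩
    simpa [List.isChain_append, hbc] using hch
  · have hxby : [x, b, y].IsChain R := hch.infix ⟨s, t, by simp⟩
    simp only [List.isChain_cons_cons, List.isChain_singleton, and_true] at hxby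
    simp only [List.append_assoc, List.cons_append, List.nil_append, List.nodup_append,
      List.nodup_cons, List.mem_cons] at hl
    have hxb : x ≠ b := fun h => by simp_all
    have hyb : y ≠ b := fun h => by simp_all
    have hxy : x ≠ y := fun h => by simp_all
    exact (hxy (huniq x (by simp) y (by simp) hxb hyb hxby.1 hxby.2)).elim

namespace Dgraph

variable {V : Type*}

theorem Acyclic.of_forall_transGen {G H : Dgraph V} (hH : H.Acyclic)
    (h : ∀ x y, (x, y) ∈ G.arcs → Relation.TransGen (fun a b => (a, b) ∈ H.arcs) x y) :
    G.Acyclic :=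
  fun v hv => hH v (Relation.TransGen.lift' id h v v hv)

variable [DecidableEq V]

theorem indeg_mono {G H : Dgraph V} (h : G.arcs ⊆ H.arcs) (v : V) : G.indeg v ≤ H.indeg v :=
  Finset.card_le_card (Finset.filter_subset_filter _ h)

theorem outdeg_mono {G H : Dgraph V} (h : G.arcs ⊆ H.arcs) (v : V) : G.outdeg v ≤ H.outdeg v :=
  Finset.card_le_card (Finset.filter_subset_filter _ h)

theorem indeg_ne_zero_iff {G : Dgraph V} {v : V} : G.indeg v ≠ 0 ↔ ∃ a ∈ G.arcs, a.2 = v := by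
  rw [indeg, Finset.card_ne_zero, Finset.filter_nonempty_iff]

theorem outdeg_ne_zero_iff {G : Dgraph V} {v : V} : G.outdeg v ≠ 0 ↔ ∃ a ∈ G.arcs, a.1 = v := by
  rw [outdeg, Finset.card_ne_zero, Finset.filter_nonempty_iff]

theorem indeg_ne_zero_of_mem {G : Dgraph V} {a : V × V} (ha : a ∈ G.arcs) : G.indeg a.2 ≠ 0 :=
  indeg_ne_zero_iff.2 ⟨a, ha, rfl⟩

theorem outdeg_ne_zero_of_mem {G : Dgraph V} {a : V × V} (ha : a ∈ G.arcs) : G.outdeg a.1 ≠ 0 :=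
  outdeg_ne_zero_iff.2 ⟨a, ha, rfl⟩

theorem mem_verts_of_indeg_ne_zero {G : Dgraph V} {v : V} (h : G.indeg v ≠ 0) : v ∈ G.verts := by
  obtain ⟨a, ha, rfl⟩ := indeg_ne_zero_iff.1 h
  exact G.head_mem a ha

theorem mem_verts_of_outdeg_ne_zero {G : Dgraph V} {v : V} (h : G.outdeg v ≠ 0) :
    v ∈ G.verts := by
  obtain ⟨a, ha, rfl⟩ := outdeg_ne_zero_iff.1 h
  exact G.tail_mem a ha

theorem indeg_eq_zero_of_notMem {G : Dgraph V} {v : V} (hv : v ∉ G.verts) : G.indeg v = 0 :=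
  not_not.1 (mt mem_verts_of_indeg_ne_zero hv)

theorem outdeg_eq_zero_of_notMem {G : Dgraph V} {v : V} (hv : v ∉ G.verts) : G.outdeg v = 0 :=
  not_not.1 (mt mem_verts_of_outdeg_ne_zero hv)

theorem eq_of_indeg_le_two {G : Dgraph V} {a b c : V × V} (h : G.indeg a.2 ≤ 2)
    (ha : a ∈ G.arcs) (hb : b ∈ G.arcs) (hc : c ∈ G.arcs) (hab : a ≠ b) (hac : a ≠ c)
    (hab' : a.2 = b.2) (hac' : a.2 = c.2) : b = c :=
  Finset.eq_of_card_le_two h (Finset.mem_filter.2 ⟨ha, rfl⟩) (Finset.mem_filter.2 ⟨hb, hab'.symm⟩)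
    (Finset.mem_filter.2 ⟨hc, hac'.symm⟩) hab hac

theorem eq_of_outdeg_le_two {G : Dgraph V} {a b c : V × V} (h : G.outdeg a.1 ≤ 2)
    (ha : a ∈ G.arcs) (hb : b ∈ G.arcs) (hc : c ∈ G.arcs) (hab : a ≠ b) (hac : a ≠ c)
    (hab' : a.1 = b.1) (hac' : a.1 = c.1) : b = c :=
  Finset.eq_of_card_le_two h (Finset.mem_filter.2 ⟨ha, rfl⟩) (Finset.mem_filter.2 ⟨hb, hab'.symm⟩)
    (Finset.mem_filter.2 ⟨hc, hac'.symm⟩) hab hac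

theorem eq_of_indeg_le_one {G : Dgraph V} {a b : V × V} (h : G.indeg a.2 ≤ 1)
    (ha : a ∈ G.arcs) (hb : b ∈ G.arcs) (hab : a.2 = b.2) : a = b :=
  Finset.card_le_one.1 h a (by simp [ha]) b (by simp [hb, hab])

theorem eq_of_outdeg_le_one {G : Dgraph V} {a b : V × V} (h : G.outdeg a.1 ≤ 1)
    (ha : a ∈ G.arcs) (hb : b ∈ G.arcs) (hab : a.1 = b.1) : a = b :=
  Finset.card_le_one.1 h a (by simp [ha]) b (by simp [hb, hab])

theorem indeg_ofArcs {H : Dgraph V} {S : Finset (V × V)} (hS : S ⊆ H.arcs) (v : V) :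
    (ofArcs S).indeg v = (H.arcs.filter (fun a => a.2 = v) ∩ S).card := by
  rw [Finset.filter_inter, Finset.inter_eq_right.2 hS]
  rfl

theorem outdeg_ofArcs {H : Dgraph V} {S : Finset (V × V)} (hS : S ⊆ H.arcs) (v : V) :
    (ofArcs S).outdeg v = (H.arcs.filter (fun a => a.1 = v) ∩ S).card := by
  rw [Finset.filter_inter, Finset.inter_eq_right.2 hS]
  rfl

theorem isAdmissible_iff {H : Dgraph V} {S : Finset (V × V)} (hin : ∀ v, H.indeg v ≤ 2)
    (hout : ∀ v, H.outdeg v ≤ 2) :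
    IsAdmissible H S ↔ S ⊆ H.arcs ∧
      ∀ a ∈ H.arcs, (ofArcs S).indeg a.2 = 1 ∧ (ofArcs S).outdeg a.1 ≠ 0 := by
  have hfiber : ∀ a ∈ H.arcs, S ⊆ H.arcs →
      ((ofArcs S).indeg a.2 = 1 ↔ (H.indeg a.2 = 1 → a ∈ S) ∧
        ∀ b ∈ H.arcs, a ≠ b → a.2 = b.2 → (a ∈ S ∧ b ∉ S ∨ a ∉ S ∧ b ∈ S)) ∧
      ((ofArcs S).outdeg a.1 ≠ 0 ↔ (H.outdeg a.1 = 1 → a ∈ S) ∧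
        ∀ b ∈ H.arcs, a ≠ b → a.1 = b.1 → (a ∈ S ∨ b ∈ S)) := by
    intro a ha hS
    rw [indeg_ofArcs hS, outdeg_ofArcs hS, Finset.card_ne_zero,
      Finset.card_inter_eq_one_iff_of_card_le_two (a := a) (by simp [ha]) (hin _),
      Finset.inter_nonempty_iff_of_card_le_two (a := a) (by simp [ha]) (hout _)]
    simp only [Finset.mem_filter, and_imp]
    exact ⟨and_congr_right fun _ => forall₂_congr fun _ _ =>
        ⟨fun h hne heq => h heq.symm hne, fun h heq hne => h hne heq.symm⟩,
      and_congr_right fun _ => forall₂_congr fun _ _ =>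
        ⟨fun h hne heq => h heq.symm hne, fun h heq hne => h hne heq.symm⟩⟩
  constructor
  · rintro ⟨hS, h1, h2, h3⟩
    exact ⟨hS, fun a ha => ⟨(hfiber a ha hS).1.2 ⟨fun h => h1 a ha (.inl h), h2 a ha⟩,
      (hfiber a ha hS).2.2 ⟨fun h => h1 a ha (.inr h), h3 a ha⟩⟩⟩
  · rintro ⟨hS, h⟩
    have hin' := fun a ha => (hfiber a ha hS).1.1 (h a ha).1
    have hout' := fun a ha => (hfiber a ha hS).2.1 (h a ha).2
    exact ⟨hS, fun a ha hdeg => hdeg.elim (hin' a ha).1 (hout' a ha).1,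
      fun a ha => (hin' a ha).2, fun a ha => (hout' a ha).2⟩

theorem exists_isMaxZigzag_mem {N : Dgraph V} {a : V × V} (ha : a ∈ N.arcs) :
    ∃ Z, IsMaxZigzag N Z ∧ a ∈ Z := by
  have hfin : {Z | IsZigzag N Z}.Finite :=
    N.arcs.powerset.finite_toSet.subset fun Z hZ => Finset.mem_powerset.2 hZ.1
  have ha' : IsZigzag N {a} :=
    ⟨Finset.singleton_subset_iff.2 ha, [a], by simp, by simp, by simp, List.isChain_singleton a⟩
  obtain ⟨Z, haZ, hZ, hmax⟩ := hfin.exists_le_maximal ha'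
  exact ⟨Z, ⟨hZ, fun Z' hZ' hZZ' => (hmax hZ' hZZ').antisymm hZZ'⟩,
    haZ (Finset.mem_singleton_self a)⟩

theorem IsMaxZigzag.mem_of_adj {N : Dgraph V} (hin : ∀ v, N.indeg v ≤ 2)
    (hout : ∀ v, N.outdeg v ≤ 2) {Z : Finset (V × V)} (hZ : IsMaxZigzag N Z) {b c : V × V}
    (hb : b ∈ Z) (hc : c ∈ N.arcs) (hbc : b.2 = c.2 ∨ b.1 = c.1) : c ∈ Z := by
  by_contra hcZ
  obtain ⟨⟨hZN, l, -, hl, rfl, hch⟩, hmax⟩ := hZ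
  rw [List.mem_toFinset] at hb hcZ
  have hbN := hZN (List.mem_toFinset.2 hb)
  have huniq : ∀ x ∈ l, ∀ y ∈ l, x ≠ b → y ≠ b →
      (x.2 = b.2 ∨ x.1 = b.1) → (b.2 = y.2 ∨ b.1 = y.1) → x = y := by
    intro x hx y hy hxb hyb hxb' hby
    have hbx : b.2 = x.2 ∨ b.1 = x.1 := hxb'.imp Eq.symm Eq.symm
    have hxN := hZN (List.mem_toFinset.2 hx)
    have hyN := hZN (List.mem_toFinset.2 hy)
    have hxc : x ≠ c := fun h => hcZ (h ▸ hx)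
    have hyc : y ≠ c := fun h => hcZ (h ▸ hy)
    have hbc' : b ≠ c := fun h => hcZ (h ▸ hb)
    rcases hbc with hbc | hbc
    · have hx1 : b.1 = x.1 := hbx.resolve_left fun h =>
        hxc (eq_of_indeg_le_two (hin _) hbN hxN hc hxb.symm hbc' h hbc)
      have hy1 : b.1 = y.1 := hby.resolve_left fun h =>
        hyc (eq_of_indeg_le_two (hin _) hbN hyN hc hyb.symm hbc' h hbc)
      exact eq_of_outdeg_le_two (hout _) hbN hxN hyN hxb.symm hyb.symm hx1 hy1
    · have hx2 : b.2 = x.2 := hbx.resolve_right fun h =>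
        hxc (eq_of_outdeg_le_two (hout _) hbN hxN hc hxb.symm hbc' h hbc)
      have hy2 : b.2 = y.2 := hby.resolve_right fun h =>
        hyc (eq_of_outdeg_le_two (hout _) hbN hyN hc hyb.symm hbc' h hbc)
      exact eq_of_indeg_le_two (hin _) hbN hxN hyN hxb.symm hyb.symm hx2 hy2
  obtain ⟨l', hperm, hch'⟩ := List.exists_perm_cons_isChain hl hch hb hbc
    (hbc.imp Eq.symm Eq.symm) huniq
  have hzig : IsZigzag N (insert c l.toFinset) := by
    refine ⟨Finset.insert_subset hc hZN, l', fun h => by simpa [h] using hperm.length_eq,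
      hperm.nodup_iff.2 (List.nodup_cons.2 ⟨hcZ, hl⟩), ?_, hch'⟩
    rw [List.toFinset_eq_of_perm _ _ hperm, List.toFinset_cons]
  exact hcZ (List.mem_toFinset.1
    (hmax _ hzig (Finset.subset_insert _ _) ▸ Finset.mem_insert_self c _))

theorem IsMaxZigzag.indeg_ofArcs_inter {N G : Dgraph V} (hin : ∀ v, N.indeg v ≤ 2)
    (hout : ∀ v, N.outdeg v ≤ 2) {Z : Finset (V × V)} (hZ : IsMaxZigzag N Z)
    (hG : G.arcs ⊆ N.arcs) {a : V × V} (ha : a ∈ Z) :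
    (ofArcs (G.arcs ∩ Z)).indeg a.2 = G.indeg a.2 := by
  refine congrArg Finset.card ?_
  ext x
  simp only [ofArcs, Finset.mem_filter, Finset.mem_inter, and_congr_left_iff, and_iff_left_iff_imp]
  exact fun hx hxG => hZ.mem_of_adj hin hout ha (hG hxG) (.inl hx.symm)

theorem IsMaxZigzag.outdeg_ofArcs_inter {N G : Dgraph V} (hin : ∀ v, N.indeg v ≤ 2)
    (hout : ∀ v, N.outdeg v ≤ 2) {Z : Finset (V × V)} (hZ : IsMaxZigzag N Z)
    (hG : G.arcs ⊆ N.arcs) {a : V × V} (ha : a ∈ Z) :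
    (ofArcs (G.arcs ∩ Z)).outdeg a.1 = G.outdeg a.1 := by
  refine congrArg Finset.card ?_
  ext x
  simp only [ofArcs, Finset.mem_filter, Finset.mem_inter, and_congr_left_iff, and_iff_left_iff_imp]
  exact fun hx hxG => hZ.mem_of_adj hin hout ha (hG hxG) (.inr hx.symm)

theorem forall_isAdmissible_inter_iff {N G : Dgraph V} (hin : ∀ v, N.indeg v ≤ 2)
    (hout : ∀ v, N.outdeg v ≤ 2) (hG : G.arcs ⊆ N.arcs) :
    (∀ Z, IsMaxZigzag N Z → IsAdmissible (ofArcs Z) (G.arcs ∩ Z)) ↔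
      ∀ a ∈ N.arcs, G.indeg a.2 = 1 ∧ G.outdeg a.1 ≠ 0 := by
  have hadm : ∀ Z, IsMaxZigzag N Z → (IsAdmissible (ofArcs Z) (G.arcs ∩ Z) ↔
      ∀ a ∈ Z, G.indeg a.2 = 1 ∧ G.outdeg a.1 ≠ 0) := fun Z hZ => by
    rw [isAdmissible_iff (fun v => (indeg_mono hZ.1.1 v).trans (hin v))
      (fun v => (outdeg_mono hZ.1.1 v).trans (hout v))]
    refine (and_iff_right Finset.inter_subset_right).trans (forall₂_congr fun a ha => ?_)
    rw [hZ.indeg_ofArcs_inter hin hout hG ha, hZ.outdeg_ofArcs_inter hin hout hG ha]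
  refine ⟨fun h a ha => ?_, fun h Z hZ => (hadm Z hZ).2 fun a ha => h a (hZ.1.1 ha)⟩
  obtain ⟨Z, hZ, haZ⟩ := exists_isMaxZigzag_mem ha
  exact (hadm Z hZ).1 (h Z hZ) a haZ

section Subdivision

variable {H K : Dgraph V} {u v w : V}

theorem indeg_of_subdivide (huv : (u, v) ∈ H.arcs) (hw : w ∉ H.verts)
    (hK : K.arcs = insert (u, w) (insert (w, v) (H.arcs.erase (u, v)))) (x : V) :
    K.indeg x = if x = w then 1 else H.indeg x := by
  have hvw : v ≠ w := fun h => hw (h ▸ H.head_mem _ huv)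
  have hwv : (w, v) ∉ H.arcs := fun h => hw (H.tail_mem _ h)
  rw [indeg, indeg, hK, Finset.filter_insert, Finset.filter_insert, Finset.filter_erase]
  by_cases hx : x = w
  · subst hx
    have hH : H.arcs.filter (fun a => a.2 = x) = ∅ :=
      Finset.card_eq_zero.1 (indeg_eq_zero_of_notMem hw)
    simp [hH, hvw]
  · by_cases hxv : x = v
    · subst hxv
      rw [if_neg (Ne.symm hx), if_pos rfl, if_neg hx,
        Finset.card_insert_of_notMem (by simp [hwv]), Finset.card_erase_add_one (by simp [huv])]
    · rw [if_neg (Ne.symm hx), if_neg (Ne.symm hxv), if_neg hx,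
        Finset.erase_eq_of_notMem (by simp [Ne.symm hxv])]

theorem outdeg_of_subdivide (huv : (u, v) ∈ H.arcs) (hw : w ∉ H.verts)
    (hK : K.arcs = insert (u, w) (insert (w, v) (H.arcs.erase (u, v)))) (x : V) :
    K.outdeg x = if x = w then 1 else H.outdeg x := by
  have huw : u ≠ w := fun h => hw (h ▸ H.tail_mem _ huv)
  have huw' : (u, w) ∉ H.arcs := fun h => hw (H.head_mem _ h)
  rw [outdeg, outdeg, hK, Finset.filter_insert, Finset.filter_insert, Finset.filter_erase]
  by_cases hx : x = w
  · subst hx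
    have hH : H.arcs.filter (fun a => a.1 = x) = ∅ :=
      Finset.card_eq_zero.1 (outdeg_eq_zero_of_notMem hw)
    simp [hH, huw]
  · by_cases hxu : x = u
    · subst hxu
      rw [if_pos rfl, if_neg (Ne.symm hx), if_neg hx,
        Finset.card_insert_of_notMem (by simp [huw']), Finset.card_erase_add_one (by simp [huv])]
    · rw [if_neg (Ne.symm hxu), if_neg (Ne.symm hx), if_neg hx,
        Finset.erase_eq_of_notMem (by simp [Ne.symm hxu])]

theorem SubdivideArc.exists_degrees (h : SubdivideArc H K) :
    ∃ w ∉ H.verts, K.verts = insert w H.verts ∧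
      (∀ x, K.indeg x = if x = w then 1 else H.indeg x) ∧
      ∀ x, K.outdeg x = if x = w then 1 else H.outdeg x := by
  obtain ⟨u, v, w, huv, hw, hverts, harcs⟩ := h
  exact ⟨w, hw, hverts, indeg_of_subdivide huv hw harcs, outdeg_of_subdivide huv hw harcs⟩

end Subdivision

/-- For acyclic graphs these conditions characterise the subdivisions of rooted binary
phylogenetic `X`-trees with root `r`. -/
structure HasTreeDegrees (τ : Dgraph V) (X : Finset V) (r : V) : Prop where
  subset_verts : X ⊆ τ.verts
  root_mem : r ∈ τ.verts
  indeg_root : τ.indeg r = 0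
  outdeg_root : τ.outdeg r = 1 ∨ τ.outdeg r = 2
  indeg_of_ne_root : ∀ v ∈ τ.verts, v ≠ r → τ.indeg v = 1
  outdeg_eq_zero_iff : ∀ v ∈ τ.verts, τ.outdeg v = 0 ↔ v ∈ X
  outdeg_le_two : ∀ v, τ.outdeg v ≤ 2

theorem SubdivideArc.hasTreeDegrees_iff {H K : Dgraph V} {X : Finset V} {r : V}
    (h : SubdivideArc H K) : HasTreeDegrees H X r ↔ HasTreeDegrees K X r := by
  obtain ⟨w, hw, hverts, hin, hout⟩ := h.exists_degrees
  have hmem : ∀ x, x ∈ K.verts ↔ x = w ∨ x ∈ H.verts := by simp [hverts]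
  constructor
  · intro hH
    have hrw : r ≠ w := fun h => hw (h ▸ hH.root_mem)
    have hXw : w ∉ X := fun h => hw (hH.subset_verts h)
    refine ⟨fun x hx => (hmem x).2 (.inr (hH.subset_verts hx)), (hmem r).2 (.inr hH.root_mem),
      by simpa [hin, hrw] using hH.indeg_root, by simpa [hout, hrw] using hH.outdeg_root,
      fun x hx hxr => ?_, fun x hx => ?_, fun x => ?_⟩
    · rcases (hmem x).1 hx with rfl | hx
      · simp [hin]
      · rw [hin, if_neg (ne_of_mem_of_not_mem hx hw)]
        exact hH.indeg_of_ne_root x hx hxr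
    · rcases (hmem x).1 hx with rfl | hx
      · simp [hout, hXw]
      · rw [hout, if_neg (ne_of_mem_of_not_mem hx hw)]
        exact hH.outdeg_eq_zero_iff x hx
    · rw [hout]
      split_ifs
      exacts [by norm_num, hH.outdeg_le_two x]
  · intro hK
    have hrw : r ≠ w := fun h => by simpa [h, hin] using hK.indeg_root
    have hXw : w ∉ X := fun h => by
      simpa [hout] using (hK.outdeg_eq_zero_iff w ((hmem w).2 (.inl rfl))).2 h
    refine ⟨fun x hx => ((hmem x).1 (hK.subset_verts hx)).resolve_left (fun h => hXw (h ▸ hx)),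
      ((hmem r).1 hK.root_mem).resolve_left hrw, by simpa [hin, hrw] using hK.indeg_root,
      by simpa [hout, hrw] using hK.outdeg_root, fun x hx hxr => ?_, fun x hx => ?_, fun x => ?_⟩
    · simpa [hin, ne_of_mem_of_not_mem hx hw] using
        hK.indeg_of_ne_root x ((hmem x).2 (.inr hx)) hxr
    · simpa [hout, ne_of_mem_of_not_mem hx hw] using
        hK.outdeg_eq_zero_iff x ((hmem x).2 (.inr hx))
    · by_cases hxw : x = w
      · simp [outdeg_eq_zero_of_notMem (hxw ▸ hw)]
      · simpa [hout, hxw] using hK.outdeg_le_two x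

theorem IsSubdivisionOf.hasTreeDegrees {T τ : Dgraph V} {X : Finset V} {r : V}
    (h : IsSubdivisionOf T τ) (hT : HasTreeDegrees T X r) : HasTreeDegrees τ X r := by
  induction h with
  | refl => exact hT
  | step _ hs ih => exact hs.hasTreeDegrees_iff.1 ih

/-- Suppressing `w`, i.e. replacing its arcs `(u, w)` and `(w, v)` by `(u, v)`, undoes a
subdivision; `(u, v)` is not already an arc since `v` has only one in-arc. -/
theorem exists_subdivideArc_of_indeg_outdeg_eq_one {τ : Dgraph V} (hτ : τ.Acyclic)
    (hin : ∀ x, τ.indeg x ≤ 1) {w : V} (hw_in : τ.indeg w = 1) (hw_out : τ.outdeg w = 1) :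
    ∃ τ' : Dgraph V, SubdivideArc τ' τ ∧ τ'.verts = τ.verts.erase w ∧ τ'.Acyclic := by
  obtain ⟨⟨u, w'⟩, huw, hw'⟩ := indeg_ne_zero_iff.1 (by omega : τ.indeg w ≠ 0)
  obtain rfl : w = w' := hw'.symm
  obtain ⟨⟨w', v⟩, hwv, hw'⟩ := outdeg_ne_zero_iff.1 (by omega : τ.outdeg w ≠ 0)
  obtain rfl : w = w' := hw'.symm
  have hloop : ∀ x, (x, x) ∉ τ.arcs := fun x hx => hτ x (.single hx)
  have hu : u ≠ w := fun h => hloop w (h ▸ huw)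
  have hv : v ≠ w := fun h => hloop w (h ▸ hwv)
  have huv : (u, v) ∉ τ.arcs := fun h =>
    hu (congrArg Prod.fst (eq_of_indeg_le_one (hin v) h hwv rfl))
  have hin_w : ∀ a ∈ τ.arcs, a.2 = w → a = (u, w) :=
    fun a ha h => eq_of_indeg_le_one (h ▸ hw_in.le) ha huw h
  have hout_w : ∀ a ∈ τ.arcs, a.1 = w → a = (w, v) :=
    fun a ha h => eq_of_outdeg_le_one (h ▸ hw_out.le) ha hwv h
  set A := insert (u, v) ((τ.arcs.erase (u, w)).erase (w, v)) with hA
  have hmemA : ∀ a ∈ A, a = (u, v) ∨ a ∈ τ.arcs ∧ a.1 ≠ w ∧ a.2 ≠ w := by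
    intro a ha
    simp only [hA, Finset.mem_insert, Finset.mem_erase] at ha
    rcases ha with rfl | ⟨h1, h2, ha⟩
    · exact .inl rfl
    · exact .inr ⟨ha, fun h => h1 (hout_w a ha h), fun h => h2 (hin_w a ha h)⟩
  let τ' : Dgraph V :=
    { verts := τ.verts.erase w
      arcs := A
      tail_mem := fun a ha => by
        rcases hmemA a ha with rfl | ⟨ha, hw, -⟩
        exacts [Finset.mem_erase.2 ⟨hu, τ.tail_mem (u, w) huw⟩,
          Finset.mem_erase.2 ⟨hw, τ.tail_mem _ ha⟩]
      head_mem := fun a ha => by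
        rcases hmemA a ha with rfl | ⟨ha, -, hw⟩
        exacts [Finset.mem_erase.2 ⟨hv, τ.head_mem (w, v) hwv⟩,
          Finset.mem_erase.2 ⟨hw, τ.head_mem _ ha⟩] }
  have harcs : τ.arcs = insert (u, w) (insert (w, v) (A.erase (u, v))) := by
    rw [hA, Finset.erase_insert (by simp [huv]), Finset.insert_erase
      (Finset.mem_erase.2 ⟨fun h => hv (congrArg Prod.snd h), hwv⟩), Finset.insert_erase huw]
  refine ⟨τ', ⟨u, v, w, Finset.mem_insert_self _ _, Finset.notMem_erase w _,
    (Finset.insert_erase (τ.tail_mem _ hwv)).symm, harcs⟩, rfl, hτ.of_forall_transGen ?_⟩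
  intro x y hxy
  rcases hmemA _ hxy with h | ⟨h, -⟩
  · obtain ⟨rfl, rfl⟩ := Prod.ext_iff.1 h
    exact .head huw (.single hwv)
  · exact .single h

namespace HasTreeDegrees

variable {τ : Dgraph V} {X : Finset V} {r : V}

theorem indeg_le_one (hτ : HasTreeDegrees τ X r) (v : V) : τ.indeg v ≤ 1 := by
  by_cases hv : v ∈ τ.verts
  · by_cases hvr : v = r
    · simp [hvr, hτ.indeg_root]
    · exact (hτ.indeg_of_ne_root v hv hvr).le
  · simp [indeg_eq_zero_of_notMem hv]

theorem isRBPT (hτ : HasTreeDegrees τ X r) (hacyc : τ.Acyclic) (hX : X.Nonempty)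
    (hsupp : ∀ v ∈ τ.verts, τ.indeg v = 1 → τ.outdeg v ≠ 1) : IsRBPT τ X := by
  have hrX : r ∉ X := fun h => by
    have := (hτ.outdeg_eq_zero_iff r hτ.root_mem).2 h
    rcases hτ.outdeg_root with h | h <;> omega
  refine ⟨⟨hacyc, hX, hτ.subset_verts, r, hτ.root_mem, hτ.indeg_root, hτ.outdeg_root,
    fun v hv h0 => ?_, fun v hv => ?_, fun v hv hvX hvr => ?_⟩, fun v hv => ?_⟩
  · by_contra hvr
    simp [hτ.indeg_of_ne_root v hv hvr] at h0
  · refine ⟨fun ⟨_, _, h⟩ => (hτ.outdeg_eq_zero_iff v hv).1 h, fun h => ?_⟩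
    exact ⟨hv, hτ.indeg_of_ne_root v hv (ne_of_mem_of_not_mem h hrX),
      (hτ.outdeg_eq_zero_iff v hv).2 h⟩
  · have h1 := hτ.indeg_of_ne_root v hv hvr
    have := hsupp v hv h1
    have := hτ.outdeg_le_two v
    have := mt (hτ.outdeg_eq_zero_iff v hv).1 hvX
    omega
  · have := hτ.indeg_le_one v
    omega

end HasTreeDegrees

theorem exists_isRBPT_isSubdivisionOf {τ : Dgraph V} {X : Finset V} {r : V}
    (hτ : HasTreeDegrees τ X r) (hacyc : τ.Acyclic) (hX : X.Nonempty) :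
    ∃ T, IsRBPT T X ∧ IsSubdivisionOf T τ := by
  induction hn : τ.verts.card using Nat.strong_induction_on generalizing τ with
  | _ n ih =>
    by_cases hsupp : ∀ v ∈ τ.verts, τ.indeg v = 1 → τ.outdeg v ≠ 1
    · exact ⟨τ, hτ.isRBPT hacyc hX hsupp, .refl τ⟩
    push Not at hsupp
    obtain ⟨w, hw, hw_in, hw_out⟩ := hsupp
    obtain ⟨τ', hτ'τ, hverts, hacyc'⟩ :=
      exists_subdivideArc_of_indeg_outdeg_eq_one hacyc hτ.indeg_le_one hw_in hw_out
    obtain ⟨T, hT, hTτ'⟩ := ih _ (hn ▸ hverts ▸ Finset.card_erase_lt_of_mem hw)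
      (hτ'τ.hasTreeDegrees_iff.2 hτ) hacyc' rfl
    exact ⟨T, hT, hTτ'.step hτ'τ⟩

namespace IsRBPN

variable {N : Dgraph V} {X : Finset V}

theorem indeg_le_two (hN : IsRBPN N X) (v : V) : N.indeg v ≤ 2 := by
  obtain ⟨-, -, -, ρ, -, hρin, -, -, hleaf, hother⟩ := hN
  by_cases hv : v ∈ N.verts
  · by_cases hvρ : v = ρ
    · subst hvρ; omega
    by_cases hvX : v ∈ X
    · simp [((hleaf v hv).2 hvX).2.1]
    · rcases hother v hv hvX hvρ with h | h <;> omega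
  · simp [indeg_eq_zero_of_notMem hv]

theorem outdeg_le_two (hN : IsRBPN N X) (v : V) : N.outdeg v ≤ 2 := by
  obtain ⟨-, -, -, ρ, -, -, hρout, -, hleaf, hother⟩ := hN
  by_cases hv : v ∈ N.verts
  · by_cases hvρ : v = ρ
    · subst hvρ; omega
    by_cases hvX : v ∈ X
    · simp [((hleaf v hv).2 hvX).2.2]
    · rcases hother v hv hvX hvρ with h | h <;> omega
  · simp [outdeg_eq_zero_of_notMem hv]

theorem outdeg_eq_zero_iff (hN : IsRBPN N X) {v : V} (hv : v ∈ N.verts) :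
    N.outdeg v = 0 ↔ v ∈ X := by
  obtain ⟨-, -, -, ρ, -, -, hρout, -, hleaf, hother⟩ := hN
  refine ⟨fun h => ?_, fun h => ((hleaf v hv).2 h).2.2⟩
  by_contra hvX
  by_cases hvρ : v = ρ
  · subst hvρ; omega
  · rcases hother v hv hvX hvρ with h' | h' <;> omega

end IsRBPN

theorem IsRBPT.hasTreeDegrees {T : Dgraph V} {X : Finset V} (hT : IsRBPT T X) :
    ∃ r, HasTreeDegrees T X r := by
  obtain ⟨hTN, hno2⟩ := hT
  obtain ⟨-, -, hXsub, ρ, hρ, hρin, hρout, -, hleaf, hother⟩ := id hTN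
  refine ⟨ρ, hXsub, hρ, hρin, hρout, fun v hv hvρ => ?_, fun v hv => hTN.outdeg_eq_zero_iff hv,
    hTN.outdeg_le_two⟩
  by_cases hvX : v ∈ X
  · exact ((hleaf v hv).2 hvX).2.1
  · rcases hother v hv hvX hvρ with h | h
    exacts [h.1, (hno2 v hv h.1).elim]

theorem exists_hasTreeDegrees_of_forall_arcs {N G : Dgraph V} {X : Finset V}
    (hN : IsRBPN N X) (hG : IsSubgraph G N)
    (h : ∀ a ∈ N.arcs, G.indeg a.2 = 1 ∧ G.outdeg a.1 ≠ 0) :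
    G.verts = N.verts ∧ ∃ ρ, HasTreeDegrees G X ρ := by
  obtain ⟨-, -, hXsub, ρ, hρ, hρin, hρout, hρuniq, -, -⟩ := id hN
  have hρout' : N.outdeg ρ ≠ 0 := by rcases hρout with h | h <;> omega
  have hin : ∀ v, N.indeg v ≠ 0 → G.indeg v = 1 := fun v hv => by
    obtain ⟨a, ha, rfl⟩ := indeg_ne_zero_iff.1 hv
    exact (h a ha).1
  have hout : ∀ v, N.outdeg v ≠ 0 → G.outdeg v ≠ 0 := fun v hv => by
    obtain ⟨a, ha, rfl⟩ := outdeg_ne_zero_iff.1 hv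
    exact (h a ha).2
  have hverts : G.verts = N.verts := by
    refine hG.1.antisymm fun v hv => ?_
    by_cases h0 : N.indeg v = 0
    · exact mem_verts_of_outdeg_ne_zero (hout v (hρuniq v hv h0 ▸ hρout'))
    · exact mem_verts_of_indeg_ne_zero (by simp [hin v h0])
  refine ⟨hverts, ρ, hverts ▸ hXsub, hverts ▸ hρ, by have := indeg_mono hG.2 ρ; omega, ?_,
    fun v hv hvρ => hin v fun h0 => hvρ (hρuniq v (hverts ▸ hv) h0), fun v hv => ?_,
    fun v => (outdeg_mono hG.2 v).trans (hN.outdeg_le_two v)⟩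
  · have := hout ρ hρout'
    have := outdeg_mono hG.2 ρ
    rcases hρout with h | h <;> omega
  · rw [← hN.outdeg_eq_zero_iff (hverts ▸ hv)]
    have := outdeg_mono hG.2 v
    have := hout v
    omega

theorem isSupportTree_iff {N G : Dgraph V} {X : Finset V} (hN : IsRBPN N X)
    (hG : IsSubgraph G N) :
    IsSupportTree N X G ↔ ∀ a ∈ N.arcs, G.indeg a.2 = 1 ∧ G.outdeg a.1 ≠ 0 := by
  refine ⟨?_, fun h => ?_⟩
  · rintro ⟨hverts, -, T, hT, hTG⟩
    obtain ⟨-, -, -, ρ, hρ, hρin, -, -, -, -⟩ := id hN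
    obtain ⟨r, hr⟩ := hT.hasTreeDegrees
    have hGr := hTG.hasTreeDegrees hr
    obtain rfl : r = ρ := by
      by_contra h
      have := hGr.indeg_of_ne_root ρ (hverts ▸ hρ) (Ne.symm h)
      have := indeg_mono hG.2 ρ
      omega
    refine fun a ha => ⟨hGr.indeg_of_ne_root a.2 (hverts ▸ N.head_mem a ha)
      fun h => indeg_ne_zero_of_mem ha (h ▸ hρin), fun h => outdeg_ne_zero_of_mem ha ?_⟩
    rw [hN.outdeg_eq_zero_iff (N.tail_mem a ha)]
    exact (hGr.outdeg_eq_zero_iff a.1 (hverts ▸ N.tail_mem a ha)).1 h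
  · obtain ⟨hverts, ρ, hGρ⟩ := exists_hasTreeDegrees_of_forall_arcs hN hG h
    obtain ⟨T, hT, hTG⟩ := exists_isRBPT_isSubdivisionOf hGρ
      (hN.1.of_forall_transGen fun x y hxy => .single (hG.2 hxy)) hN.2.1
    exact ⟨hverts, hG.2, T, hT, hTG⟩

end Dgraph

theorem stmt4_general {V : Type*} [DecidableEq V] (N : Dgraph V) (X : Finset V)
    (hN : Dgraph.IsRBPN N X)
    (G : Dgraph V) (hG : Dgraph.IsSubgraph G N) :
    Dgraph.IsSupportTree N X G ↔
      ∀ Z : Finset (V × V), Dgraph.IsMaxZigzag N Z →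
        Dgraph.IsAdmissible (Dgraph.ofArcs Z) (G.arcs ∩ Z) :=
  (Dgraph.isSupportTree_iff hN hG).trans
    (Dgraph.forall_isAdmissible_inter_iff hN.indeg_le_two hN.outdeg_le_two hG.2).symm

/-- Let `N` be a tree-based rooted binary phylogenetic `X`-network.
A subgraph `G` of `N` is a support tree of `N` iff for every maximal zig-zag trail
`Z` of `N`, the set `A(G) ∩ A(Z)` is an admissible arc-set of (the arc-induced
subgraph) `Z`. -/
theorem stmt4 {V : Type*} [DecidableEq V] (N : Dgraph V) (X : Finset V)
    (hN : Dgraph.IsRBPN N X) (hTB : Dgraph.IsTreeBased N X)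
    (G : Dgraph V) (hG : Dgraph.IsSubgraph G N) :
    Dgraph.IsSupportTree N X G ↔
      ∀ Z : Finset (V × V), Dgraph.IsMaxZigzag N Z →
        Dgraph.IsAdmissible (Dgraph.ofArcs Z) (G.arcs ∩ Z) :=
  stmt4_general N X hN G hG
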